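/- arXiv:2004.07452 — 3 statements merged into one kernel-verified Lean document; each statement's English description precedes it below -/
import Mathlib

section
/- Let G be a graph on n vertices with Laplacian characteristic polynomial χ_G(λ) = det(λI − L(G)) = λⁿ + c_{n−1}λ^{n−1} + … + c₁λ. Then for each k, the absolute value of the coefficient c_k equals the number of rooted spanning k-forests of G (spanning forests with exactly k tree components, each with a chosen root). -/
open SimpleGraph

open scoped Classical in
/-- The Laplacian matrix of `G` with integer entries. -/
noncomputable def lap {V : Type*} [Fintype V] (G : SimpleGraph V) : Matrix V V ℤ :=
  G.lapMatrix ℤ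

/-- A rooted spanning `k`-forest of `G`: a spanning acyclic subgraph with exactly `k`
connected components, together with a set of roots containing exactly one vertex of
each connected component. -/
def RootedSpanningKForest {V : Type*} (G : SimpleGraph V) (k : ℕ) : Type _ :=
  {p : SimpleGraph V × Set V // p.1 ≤ G ∧ p.1.IsAcyclic ∧
    Nat.card p.1.ConnectedComponent = k ∧
    ∀ c : p.1.ConnectedComponent, ∃! v, v ∈ p.2 ∧ p.1.connectedComponentMk v = c}

/-!
Row `v` of `X • 1 - L` is `X • e_v + ∑_{u ~ v} (e_u - e_v)`. Expanding the determinant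
multilinearly in the rows gives a sum over parent maps `r : V → Option V`, which send each vertex
to a neighbour (its parent) or to `none` (a root); the term of `r` is
`X ^ #roots * (-1) ^ #non-roots * det (1 - P_r)`, with `P_r` the `0/1` matrix of `r`. That
determinant is `1` when every chain of parents terminates (the matrix is unitriangular for the
rank order) and `0` otherwise (the indicator of the vertices with an infinite chain of parents
lies in its kernel). Terminating parent maps with `k` roots are in bijection with rooted spanning
`k`-forests: the forest has the edges `{v, r v}`, and conversely `r v` is the neighbour of `v`
one step closer to the root of its component.
-/

namespace SimpleGraph

variable {V : Type*} {G : SimpleGraph V}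

theorem Reachable.exists_adj_dist_add_one {a v : V} (h : G.Reachable a v) (hne : a ≠ v) :
    ∃ w, G.Adj v w ∧ G.dist a w + 1 = G.dist a v := by
  obtain ⟨p, -, hp⟩ := h.exists_path_of_dist
  have hnil : ¬p.Nil := Walk.not_nil_of_ne hne
  refine ⟨p.penultimate, (p.adj_penultimate hnil).symm, ?_⟩
  have hle : G.dist a p.penultimate ≤ p.length - 1 := p.length_dropLast ▸ dist_le _
  have hge := (p.adj_penultimate hnil).reachable.dist_triangle_right a
  rw [dist_eq_one_iff_adj.mpr (p.adj_penultimate hnil)] at hge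
  have := p.length_dropLast_add_one hnil
  omega

theorem IsAcyclic.eq_of_adj_of_dist_add_one (hG : G.IsAcyclic) {a v w w' : V}
    (hw : G.Adj v w) (hw' : G.Adj v w') (hd : G.dist a w + 1 = G.dist a v)
    (hd' : G.dist a w' + 1 = G.dist a v) : w = w' := by
  have hpath {u} (hu : G.Adj v u) (hdu : G.dist a u + 1 = G.dist a v) :
      ∃ p : G.Walk a v, p.IsPath ∧ p.penultimate = u := by
    have hreach : G.Reachable a v := Reachable.of_dist_ne_zero (by omega)
    obtain ⟨q, -, hq⟩ := (hreach.trans hu.reachable).exists_path_of_dist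
    exact ⟨q.concat hu.symm, (q.concat hu.symm).isPath_of_length_eq_dist (by simp [hq, hdu]),
      q.penultimate_concat _⟩
  obtain ⟨p, hp, rfl⟩ := hpath hw hd
  obtain ⟨p', hp', rfl⟩ := hpath hw' hd'
  rw [show p = p' from
    congrArg Subtype.val ((hG.subsingleton_path a v).elim ⟨p, hp⟩ ⟨p', hp'⟩)]

/-- On a cycle, a vertex of maximal height has two distinct lower neighbours. -/
theorem isAcyclic_of_lower_neighbor_unique {α : Type*} [LinearOrder α] (f : V → α)
    (hne : ∀ ⦃v w⦄, G.Adj v w → f v ≠ f w)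
    (hlower : ∀ ⦃v w w'⦄, G.Adj v w → G.Adj v w' → f w < f v → f w' < f v → w = w') :
    G.IsAcyclic := by
  classical
  intro v c hc
  obtain ⟨u, hu, hmax⟩ := c.support.toFinset.exists_max_image f ⟨v, by simp⟩
  rw [List.mem_toFinset] at hu
  have hc' := hc.rotate hu
  have hnil : ¬(c.rotate u hu).Nil := hc'.not_nil
  have hlt {x} (hx : G.Adj u x) (hmem : x ∈ (c.rotate u hu).support) : f x < f u :=
    lt_of_le_of_ne (hmax _ (by simpa using hmem)) (hne hx).symm
  exact hc'.snd_ne_penultimate <| hlower (Walk.adj_snd hnil) (Walk.adj_penultimate hnil).symm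
    (hlt (Walk.adj_snd hnil) (Walk.getVert_mem_support _ _))
    (hlt (Walk.adj_penultimate hnil).symm (Walk.getVert_mem_support _ _))

theorem card_connectedComponent_eq_of_existsUnique {S : Set V}
    (hS : ∀ c : G.ConnectedComponent, ∃! v, v ∈ S ∧ G.connectedComponentMk v = c) :
    Nat.card G.ConnectedComponent = Nat.card S := by
  refine (Nat.card_eq_of_bijective (fun v : S => G.connectedComponentMk v) ⟨?_, ?_⟩).symm
  · rintro ⟨a, ha⟩ ⟨b, hb⟩ hab
    exact Subtype.ext ((hS _).unique ⟨ha, hab⟩ ⟨hb, rfl⟩)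
  · intro c
    obtain ⟨v, ⟨hv, rfl⟩, -⟩ := hS c
    exact ⟨⟨v, hv⟩, rfl⟩

end SimpleGraph

namespace Matrix

variable {m R : Type*} [CommRing R] [Fintype m] [DecidableEq m]

theorem BlockTriangular.det_eq_one {α : Type*} [LinearOrder α] {M : Matrix m m R} {b : m → α}
    (hM : M.BlockTriangular b) (hblock : ∀ i j, b i = b j → M i j = (1 : Matrix m m R) i j) :
    M.det = 1 := by
  rw [hM.det]
  refine Finset.prod_eq_one fun a _ => ?_
  have : M.toSquareBlock b a = 1 := by
    ext ⟨i, hi⟩ ⟨j, hj⟩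
    simp [toSquareBlock_def, one_apply, hblock i j (hi.trans hj.symm)]
  rw [this, det_one]

theorem det_of_sum_rows {ι : Type*} (s : m → Finset ι) (f : m → ι → m → R) :
    (of fun i => ∑ o ∈ s i, f i o).det =
      ∑ r ∈ Fintype.piFinset s, (of fun i => f i (r i)).det :=
  detRowAlternating.toMultilinearMap.map_sum_finset f s

end Matrix

open Matrix Polynomial Finset

section ParentMap

variable {V : Type*}

def parentGraph (r : V → Option V) : SimpleGraph V :=
  SimpleGraph.fromRel fun v w => r v = some w

section ParentGraph

variable {r : V → Option V}

theorem parentGraph_adj {v w : V} :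
    (parentGraph r).Adj v w ↔ v ≠ w ∧ (r v = some w ∨ r w = some v) :=
  fromRel_adj ..

theorem parentGraph_le {G : SimpleGraph V} (h : ∀ v w, r v = some w → G.Adj v w) :
    parentGraph r ≤ G := by
  intro v w hvw
  rcases (parentGraph_adj.1 hvw).2 with h' | h'
  exacts [h _ _ h', (h _ _ h').symm]

theorem parentGraph_adj_of_eq_some (hr : WellFounded fun w v => r v = some w) {v w : V}
    (h : r v = some w) : (parentGraph r).Adj v w :=
  parentGraph_adj.2 ⟨by rintro rfl; exact hr.irrefl.irrefl _ h, .inl h⟩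

theorem isAcyclic_parentGraph (hr : WellFounded fun w v => r v = some w) :
    (parentGraph r).IsAcyclic := by
  have : IsWellFounded V fun w v => r v = some w := ⟨hr⟩
  let rank := IsWellFounded.rank fun w v => r v = some w
  have hlt {v w} (h : r v = some w) : rank w < rank v :=
    IsWellFounded.rank_lt_of_rel (r := fun w v => r v = some w) h
  have hparent {v w} (h : (parentGraph r).Adj v w) (hwv : rank w < rank v) : r v = some w :=
    (parentGraph_adj.1 h).2.resolve_right fun h' => (hlt h').not_gt hwv
  refine isAcyclic_of_lower_neighbor_unique rank (fun v w h => ?_)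
    fun v w w' hw hw' hwv hw'v => ?_
  · rcases (parentGraph_adj.1 h).2 with h | h
    exacts [(hlt h).ne', (hlt h).ne]
  · exact Option.some_injective _ ((hparent hw hwv).symm.trans (hparent hw' hw'v))

/-- If instead `r y = some x`, then by induction on the distance the parent of `y` would also be
its neighbour one step closer to `a`. -/
theorem eq_some_of_parentGraph_adj_of_dist_add_one {a : V} (ha : r a = none) {x y : V}
    (hxy : (parentGraph r).Adj x y)
    (hd : (parentGraph r).dist a y + 1 = (parentGraph r).dist a x) : r x = some y := by
  induction hn : (parentGraph r).dist a x using Nat.strong_induction_on generalizing x y with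
  | _ n ih =>
  refine (parentGraph_adj.1 hxy).2.resolve_right fun hyx => ?_
  have hay : a ≠ y := by rintro rfl; simp [ha] at hyx
  have hreach : (parentGraph r).Reachable a y :=
    (Reachable.of_dist_ne_zero (by omega)).trans hxy.reachable
  obtain ⟨z, hyz, hdz⟩ := hreach.exists_adj_dist_add_one hay
  obtain rfl : z = x := Option.some_injective _ ((ih _ (by omega) hyz hdz rfl).symm.trans hyx)
  omega

theorem eq_of_reachable_of_eq_none {a b : V} (ha : r a = none) (hb : r b = none)
    (hab : (parentGraph r).Reachable a b) : a = b := by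
  by_contra hne
  obtain ⟨y, hy, hd⟩ := hab.exists_adj_dist_add_one hne
  simpa [hb] using eq_some_of_parentGraph_adj_of_dist_add_one ha hy hd

theorem exists_reachable_eq_none (hr : WellFounded fun w v => r v = some w) (v : V) :
    ∃ a, r a = none ∧ (parentGraph r).Reachable v a := by
  induction v using hr.induction with
  | _ v ih =>
  cases hv : r v with
  | none => exact ⟨v, hv, .refl v⟩
  | some w =>
    obtain ⟨a, ha, hwa⟩ := ih w hv
    exact ⟨a, ha, (parentGraph_adj_of_eq_some hr hv).reachable.trans hwa⟩

theorem existsUnique_eq_none (hr : WellFounded fun w v => r v = some w)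
    (c : (parentGraph r).ConnectedComponent) :
    ∃! a, r a = none ∧ (parentGraph r).connectedComponentMk a = c := by
  induction c using ConnectedComponent.ind with
  | _ v =>
  obtain ⟨a, ha, hva⟩ := exists_reachable_eq_none hr v
  refine ⟨a, ⟨ha, ConnectedComponent.sound hva.symm⟩, fun b ⟨hb, hbv⟩ => ?_⟩
  exact (eq_of_reachable_of_eq_none ha hb (hva.symm.trans (ConnectedComponent.exact hbv).symm)).symm

theorem card_connectedComponent_parentGraph [Fintype V] [DecidableEq V]
    (hr : WellFounded fun w v => r v = some w) :
    Nat.card (parentGraph r).ConnectedComponent = #{v | r v = none} := by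
  rw [card_connectedComponent_eq_of_existsUnique (S := {v | r v = none}) (existsUnique_eq_none hr),
    Nat.card_coe_set_eq, Set.ncard_eq_toFinset_card', Set.toFinset_ofPred]

theorem eq_of_parentGraph_eq {r' : V → Option V} (hr : WellFounded fun w v => r v = some w)
    (hgraph : parentGraph r = parentGraph r') (hroots : {v | r v = none} = {v | r' v = none}) :
    r = r' := by
  funext x
  obtain ⟨a, ha, hxa⟩ := exists_reachable_eq_none hr x
  have ha' : r' a = none := Set.ext_iff.1 hroots a |>.1 ha
  obtain rfl | hax := eq_or_ne a x
  · rw [ha, ha']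
  obtain ⟨y, hy, hd⟩ := hxa.symm.exists_adj_dist_add_one hax
  have h := eq_some_of_parentGraph_adj_of_dist_add_one ha hy hd
  rw [hgraph] at hy hd
  rw [h, eq_some_of_parentGraph_adj_of_dist_add_one ha' hy hd]

end ParentGraph

theorem exists_parentGraph_eq_of_root {F : SimpleGraph V} (hF : F.IsAcyclic) (root : V → V)
    (hroot_adj : ∀ ⦃v w⦄, F.Adj v w → root v = root w)
    (hreach : ∀ v, F.Reachable (root v) v) :
    ∃ r : V → Option V, parentGraph r = F ∧ (WellFounded fun w v => r v = some w) ∧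
      ∀ v, r v = none ↔ root v = v := by
  classical
  have hlower (v) (hv : root v ≠ v) :
      ∃ w, F.Adj v w ∧ F.dist (root v) w + 1 = F.dist (root v) v :=
    (hreach v).exists_adj_dist_add_one hv
  choose p hp using hlower
  let r v : Option V := if h : root v = v then none else some (p v h)
  have hr_some {v w} (h : r v = some w) : ∃ hv : root v ≠ v, p v hv = w := by
    by_cases hv : root v = v
    · simp [r, hv] at h
    · exact ⟨hv, Option.some_injective _ ((dif_neg hv).symm.trans h)⟩
  have hr_of_dist {v w} (h : F.Adj v w) (hd : F.dist (root v) w + 1 = F.dist (root v) v) :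
      r v = some w := by
    have hv : root v ≠ v := fun hv => by rw [hv, SimpleGraph.dist_self] at hd; omega
    rw [← hF.eq_of_adj_of_dist_add_one (hp v hv).1 h (hp v hv).2 hd]
    exact dif_neg hv
  refine ⟨r, ?_, ?_, fun v => by by_cases hv : root v = v <;> simp [r, hv]⟩
  · ext v w
    rw [parentGraph_adj]
    refine ⟨?_, fun h => ⟨h.ne, ?_⟩⟩
    · rintro ⟨-, h | h⟩
      · obtain ⟨hv, rfl⟩ := hr_some h
        exact (hp v hv).1
      · obtain ⟨hw, rfl⟩ := hr_some h
        exact (hp w hw).1.symm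
    · rcases hF.dist_eq_dist_add_one_of_adj_of_reachable (root v) h (hreach v) with hd | hd
      · exact .inl (hr_of_dist h (by omega))
      · exact .inr (hr_of_dist h.symm (by rw [← hroot_adj h]; omega))
  · refine Subrelation.wf (fun {w v} h => ?_)
      (InvImage.wf (fun v => F.dist (root v) v) wellFounded_lt)
    obtain ⟨hv, rfl⟩ := hr_some h
    show F.dist (root (p v hv)) (p v hv) < F.dist (root v) v
    rw [← hroot_adj (hp v hv).1]
    exact Nat.lt_of_succ_le (hp v hv).2.le

theorem exists_parentGraph_eq {F : SimpleGraph V} (hF : F.IsAcyclic) {S : Set V}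
    (hS : ∀ c : F.ConnectedComponent, ∃! v, v ∈ S ∧ F.connectedComponentMk v = c) :
    ∃ r : V → Option V, parentGraph r = F ∧ (WellFounded fun w v => r v = some w) ∧
      {v | r v = none} = S := by
  choose ρ hρ hρ_unique using hS
  obtain ⟨r, hgraph, hr, hroots⟩ := exists_parentGraph_eq_of_root hF
    (fun v => ρ (F.connectedComponentMk v))
    (fun v w h => by rw [ConnectedComponent.connectedComponentMk_eq_of_adj h])
    (fun v => ConnectedComponent.exact (hρ _).2)
  refine ⟨r, hgraph, hr, Set.ext fun v => (hroots v).trans ?_⟩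
  exact ⟨fun h => h ▸ (hρ _).1, fun hv => (hρ_unique _ v ⟨hv, rfl⟩).symm⟩

/-- Rooted spanning `k`-forests of `G`, encoded by the map sending each vertex to its parent
(the next vertex on the path to its root), or to `none` if it is a root. -/
def RootedParentMap [Fintype V] [DecidableEq V] (G : SimpleGraph V) (k : ℕ) : Type _ :=
  {r : V → Option V // (∀ v w, r v = some w → G.Adj v w) ∧
    (WellFounded fun w v => r v = some w) ∧ #{v | r v = none} = k}

namespace RootedParentMap

variable [Fintype V] [DecidableEq V] {G : SimpleGraph V} {k : ℕ}

def toRootedSpanningKForest (r : RootedParentMap G k) : RootedSpanningKForest G k :=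
  ⟨(parentGraph r.1, {v | r.1 v = none}), parentGraph_le r.2.1, isAcyclic_parentGraph r.2.2.1,
    (card_connectedComponent_parentGraph r.2.2.1).trans r.2.2.2, existsUnique_eq_none r.2.2.1⟩

theorem bijective_toRootedSpanningKForest :
    Function.Bijective (toRootedSpanningKForest : RootedParentMap G k → _) := by
  refine ⟨fun r₁ r₂ h => ?_, fun ⟨⟨F, S⟩, hle, hF, hcard, hS⟩ => ?_⟩
  · obtain ⟨hgraph, hroots⟩ := Prod.mk.inj (congrArg Subtype.val h)
    exact Subtype.ext (eq_of_parentGraph_eq r₁.2.2.1 hgraph hroots)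
  · obtain ⟨r, rfl, hr, rfl⟩ := exists_parentGraph_eq hF hS
    refine ⟨⟨r, fun v w h => hle (parentGraph_adj_of_eq_some hr h), hr, ?_⟩, rfl⟩
    rw [← card_connectedComponent_parentGraph hr, hcard]

end RootedParentMap

section ParentMatrix

variable [Fintype V] [DecidableEq V] {R : Type*} [CommRing R] {r : V → Option V}

variable (R) in
def parentMatrix (r : V → Option V) : Matrix V V R :=
  of fun v w => (1 : Matrix V V R) v w - if r v = some w then 1 else 0

theorem det_parentMatrix_of_wellFounded (hr : WellFounded fun w v => r v = some w) :
    (parentMatrix R r).det = 1 := by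
  have : IsWellFounded V fun w v => r v = some w := ⟨hr⟩
  let rank := IsWellFounded.rank fun w v => r v = some w
  have hentry {i j} (hij : ¬rank j < rank i) : parentMatrix R r i j = (1 : Matrix V V R) i j := by
    have hji : r i ≠ some j := fun h => hij (IsWellFounded.rank_lt_of_rel h)
    simp [parentMatrix, hji]
  refine BlockTriangular.det_eq_one (b := fun v => OrderDual.toDual (rank v))
    (fun i j hij => ?_) fun i j hij => hentry (by simp_all)
  rw [hentry (lt_asymm hij), one_apply_ne (by rintro rfl; exact lt_irrefl _ hij)]

theorem det_parentMatrix_of_not_wellFounded (hr : ¬WellFounded fun w v => r v = some w) :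
    (parentMatrix R r).det = 0 := by
  classical
  obtain ⟨v, hv⟩ : ∃ v, ¬Acc (fun w v => r v = some w) v := by
    by_contra! h
    exact hr ⟨h⟩
  have hacc (u : V) :
      Acc (fun w v => r v = some w) u ↔ ∀ w, r u = some w → Acc (fun w v => r v = some w) w :=
    ⟨fun h _ hw => h.inv hw, fun h => Acc.intro u h⟩
  refine det_eq_zero_of_mulVec_eq_zero_of_mem_nonZeroDivisors
    (v := fun u => if Acc (fun w v => r v = some w) u then 0 else 1) (i := v) ?_
    (by simp [hv, one_mem])
  funext u
  simp only [parentMatrix, mulVec, dotProduct, of_apply, sub_mul, Finset.sum_sub_distrib,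
    one_apply, ite_mul, one_mul, zero_mul, Finset.sum_ite_eq, Finset.mem_univ, if_true]
  cases hu : r u <;> simp [hacc u, hu]

theorem prod_ite_eq_none (r : V → Option V) :
    (∏ v, if r v = none then (X : R[X]) else -1) =
      C ((-1) ^ (Fintype.card V - #{v | r v = none})) * X ^ #{v | r v = none} := by
  rw [prod_ite, prod_const, prod_const, ← compl_filter, card_compl, mul_comm]
  simp

variable (G : SimpleGraph V) [DecidableRel G.Adj]

def parentChoices (v : V) : Finset (Option V) := {o | ∀ w, o = some w → G.Adj v w}

theorem mem_piFinset_parentChoices :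
    r ∈ Fintype.piFinset (parentChoices G) ↔ ∀ v w, r v = some w → G.Adj v w := by
  simp [parentChoices]

theorem charmatrix_lapMatrix_row (v : V) :
    (G.lapMatrix R).charmatrix v = ∑ o ∈ parentChoices G v, fun w =>
      (if o = none then X else -1) * ((1 : Matrix V V R[X]) v w - if o = some w then 1 else 0) := by
  ext w : 1
  rw [Finset.sum_apply, parentChoices, Finset.sum_filter, Fintype.sum_option]
  simp [charmatrix_apply, lapMatrix, degMatrix, adjMatrix_apply, diagonal_apply, one_apply]
  rw [← Finset.sum_filter, ← neighborFinset_eq_filter, sum_sub_distrib, sum_ite_eq',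
    sum_const, card_neighborFinset_eq_degree]
  obtain rfl | hvw := eq_or_ne v w <;> simp [*, map_natCast, sub_eq_add_neg]

theorem charpoly_lapMatrix_eq_sum :
    (G.lapMatrix R).charpoly = ∑ r ∈ Fintype.piFinset (parentChoices G),
      (∏ v, if r v = none then (X : R[X]) else -1) * (parentMatrix R[X] r).det := by
  rw [charpoly, show (G.lapMatrix R).charmatrix = of fun v => ∑ o ∈ parentChoices G v, _ from
    funext (charmatrix_lapMatrix_row G), det_of_sum_rows]
  exact sum_congr rfl fun r _ => det_mul_column _ _

theorem coeff_charpoly_lapMatrix (k : ℕ) :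
    (G.lapMatrix R).charpoly.coeff k =
      (-1) ^ (Fintype.card V - k) * Nat.card (RootedParentMap G k) := by
  classical
  have hterm (r : V → Option V) :
      ((∏ v, if r v = none then (X : R[X]) else -1) * (parentMatrix R[X] r).det).coeff k =
        if (WellFounded fun w v => r v = some w) ∧ #{v | r v = none} = k
        then (-1) ^ (Fintype.card V - k) else 0 := by
    by_cases hr : WellFounded fun w v => r v = some w
    · rw [det_parentMatrix_of_wellFounded hr, mul_one, prod_ite_eq_none, coeff_C_mul_X_pow]
      by_cases hk : #{v | r v = none} = k
      · simp [hr, hk]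
      · simp [hr, hk, Ne.symm hk]
    · simp [det_parentMatrix_of_not_wellFounded hr, hr]
  rw [charpoly_lapMatrix_eq_sum, finsetSum_coeff, sum_congr rfl fun r _ => hterm r, ← sum_filter,
    sum_const, nsmul_eq_mul, mul_comm, RootedParentMap, Nat.card_eq_fintype_card,
    Fintype.card_subtype]
  congr 3
  ext r
  simp only [mem_filter, mem_univ, true_and, mem_piFinset_parentChoices]

end ParentMatrix

end ParentMap

theorem abs_charpoly_coeff_eq_card_rooted_k_forests
    {V : Type*} [Fintype V] [DecidableEq V] (G : SimpleGraph V) (k : ℕ) :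
    ((lap G).charpoly.coeff k).natAbs = Nat.card (RootedSpanningKForest G k) := by
  classical
  have h := congrArg Int.natAbs (coeff_charpoly_lapMatrix (R := ℤ) G k)
  rw [Int.natAbs_mul, Int.natAbs_pow, Int.natAbs_neg, Int.natAbs_one, one_pow, one_mul,
    Int.natAbs_natCast] at h
  rw [← Nat.card_eq_of_bijective _ RootedParentMap.bijective_toRootedSpanningKForest, ← h, lap]
  congr!
end

section
/- Let G₁ and G₂ be graphs of orders m and n respectively, with Laplacian characteristic polynomials χ_{G₁} and χ_{G₂}. Then the Laplacian characteristic polynomial of the join G₁ * G₂ satisfies χ_{G₁*G₂}(x) = [x(x − n − m)/((x − n)(x − m))] · χ_{G₁}(x − n) · χ_{G₂}(x − m) (as an identity of rational functions, equivalently of polynomials after clearing denominators). -/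
open SimpleGraph Polynomial

/-- The join of two graphs: their disjoint union together with all edges between the
two parts. -/
def joinGraph {V₁ V₂ : Type*} (G₁ : SimpleGraph V₁) (G₂ : SimpleGraph V₂) :
    SimpleGraph (V₁ ⊕ V₂) :=
  SimpleGraph.fromRel (fun x y =>
    (∃ a b, x = Sum.inl a ∧ y = Sum.inl b ∧ G₁.Adj a b) ∨
    (∃ a b, x = Sum.inr a ∧ y = Sum.inr b ∧ G₂.Adj a b) ∨
    (∃ a b, x = Sum.inl a ∧ y = Sum.inr b))

/-! In `xI - L(G₁ * G₂)` the diagonal blocks are `A = (x - n)I - L(G₁)` and `B = (x - m)I - L(G₂)`,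
and both off-diagonal blocks are the all-ones matrix `J`. Since Laplacian rows sum to zero, the
all-ones vectors are eigenvectors of `A` and `B` with eigenvalues `α = x - n` and `β = x - m`.
One block column operation removes the upper-right `J` and turns `B` into its rank-one update
`B - (m/α) J`, whose determinant is `det B · (1 - mn/(αβ))` by the matrix determinant lemma.
Hence `αβ · χ_{G₁*G₂}(x) = (αβ - mn) · χ_{G₁}(x - n) · χ_{G₂}(x - m)`, and `αβ - mn = x(x - n - m)`.
-/

open Matrix

namespace Matrix

theorem map_mulVec_eq_smul {R S n : Type*} [CommRing R] [CommRing S] [Fintype n] (f : R →+* S)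
    {M : Matrix n n R} {x : n → R} {a : R} (h : M *ᵥ x = a • x) :
    M.map f *ᵥ (f ∘ x) = f a • (f ∘ x) := by
  ext i
  rw [← RingHom.map_mulVec, h]
  simp

theorem scalar_mulVec {R n : Type*} [CommRing R] [Fintype n] [DecidableEq n] (a : R)
    (v : n → R) : scalar n a *ᵥ v = a • v := by
  rw [scalar_apply, ← smul_one_eq_diagonal, smul_mulVec, one_mulVec]

section Field

variable {K m n : Type*} [Field K] [Fintype m] [Fintype n] [DecidableEq m] [DecidableEq n]

theorem det_add_vecMulVec_of_mulVec_eq_smul {B : Matrix n n K} {v : n → K} {β : K}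
    (hB : B *ᵥ v = β • v) (hβ : β ≠ 0) (w : n → K) :
    (B + vecMulVec v w).det = B.det * (1 + β⁻¹ * (w ⬝ᵥ v)) := by
  have hfactor : B + vecMulVec v w = B * (1 + vecMulVec (β⁻¹ • v) w) := by
    rw [Matrix.mul_add, Matrix.mul_one, mul_vecMulVec, mulVec_smul, hB, smul_smul,
      inv_mul_cancel₀ hβ, one_smul]
  rw [hfactor, det_mul, vecMulVec_eq Unit, det_one_add_replicateCol_mul_replicateRow,
    dotProduct_smul, smul_eq_mul]

theorem det_fromBlocks_vecMulVec₁₂_of_mulVec_eq_smul {A : Matrix m m K} {u : m → K} {α : K}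
    (hA : A *ᵥ u = α • u) (hα : α ≠ 0) (w : n → K) (C : Matrix n m K) (D : Matrix n n K) :
    (fromBlocks A (vecMulVec u w) C D).det = A.det * (D - α⁻¹ • (C * vecMulVec u w)).det := by
  have hcolumn_op : fromBlocks A (vecMulVec u w) C D * fromBlocks 1 (-α⁻¹ • vecMulVec u w) 0 1 =
      fromBlocks A 0 C (D - α⁻¹ • (C * vecMulVec u w)) := by
    rw [fromBlocks_multiply]
    congr 1 <;> simp [mul_vecMulVec, hA, smul_smul, inv_mul_cancel₀ hα, sub_eq_add_neg, add_comm]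
  simpa [det_fromBlocks_zero₂₁, det_fromBlocks_zero₁₂] using congrArg det hcolumn_op

theorem det_fromBlocks_vecMulVec_of_mulVec_eq_smul_of_field {A : Matrix m m K}
    {B : Matrix n n K} {u : m → K} {v : n → K} {α β : K} (hA : A *ᵥ u = α • u)
    (hB : B *ᵥ v = β • v) (hα : α ≠ 0) (hβ : β ≠ 0) :
    α * β * (fromBlocks A (vecMulVec u v) (vecMulVec v u) B).det =
      (α * β - (u ⬝ᵥ u) * (v ⬝ᵥ v)) * A.det * B.det := by
  have hrank_one : -(α⁻¹ • (vecMulVec v u * vecMulVec u v)) =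
      vecMulVec v (-(α⁻¹ * (u ⬝ᵥ u)) • v) := by
    ext i j
    simp only [vecMulVec_mul_vecMulVec, neg_apply, smul_apply, vecMulVec_apply, Pi.smul_apply,
      smul_eq_mul]
    ring
  rw [det_fromBlocks_vecMulVec₁₂_of_mulVec_eq_smul hA hα, sub_eq_add_neg, hrank_one,
    det_add_vecMulVec_of_mulVec_eq_smul hB hβ, smul_dotProduct, smul_eq_mul]
  field_simp
  ring

end Field

theorem det_fromBlocks_vecMulVec_of_mulVec_eq_smul {R m n : Type*} [CommRing R] [IsDomain R]
    [Fintype m] [Fintype n] [DecidableEq m] [DecidableEq n] {A : Matrix m m R}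
    {B : Matrix n n R} {u : m → R} {v : n → R} {α β : R} (hA : A *ᵥ u = α • u)
    (hB : B *ᵥ v = β • v) (hα : α ≠ 0) (hβ : β ≠ 0) :
    α * β * (fromBlocks A (vecMulVec u v) (vecMulVec v u) B).det =
      (α * β - (u ⬝ᵥ u) * (v ⬝ᵥ v)) * A.det * B.det := by
  set f := algebraMap R (FractionRing R)
  have hf : Function.Injective f := IsFractionRing.injective R (FractionRing R)
  apply hf
  simp only [map_mul, map_sub, RingHom.map_det, RingHom.map_dotProduct, RingHom.mapMatrix_apply,
    fromBlocks_map]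
  convert det_fromBlocks_vecMulVec_of_mulVec_eq_smul_of_field (map_mulVec_eq_smul f hA)
    (map_mulVec_eq_smul f hB) ((map_ne_zero_iff f hf).2 hα) ((map_ne_zero_iff f hf).2 hβ)
    using 4 <;> ext <;> simp [vecMulVec_apply]

theorem charpoly_add_scalar {R n : Type*} [CommRing R] [Fintype n] [DecidableEq n]
    (M : Matrix n n R) (μ : R) : (M + scalar n μ).charpoly = M.charpoly.comp (X - C μ) := by
  rw [← sub_neg_eq_add, ← map_neg, charpoly_sub_scalar, map_neg, ← sub_eq_add_neg]

theorem charmatrix_mulVec_one {R n : Type*} [CommRing R] [Fintype n] [DecidableEq n]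
    {M : Matrix n n R} {a : R} (h : M *ᵥ 1 = a • 1) : charmatrix M *ᵥ 1 = (X - C a) • 1 := by
  have hmap : M.map C *ᵥ 1 = C a • 1 := by simpa using map_mulVec_eq_smul C h
  rw [charmatrix, sub_mulVec, RingHom.mapMatrix_apply, hmap, scalar_mulVec, sub_smul]

end Matrix

section joinGraph

variable {V₁ V₂ : Type*} (G₁ : SimpleGraph V₁) (G₂ : SimpleGraph V₂)

@[simp] lemma joinGraph_adj_inl_inl {a b : V₁} :
    (joinGraph G₁ G₂).Adj (Sum.inl a) (Sum.inl b) ↔ G₁.Adj a b := by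
  simpa [joinGraph, G₁.adj_comm b a] using G₁.ne_of_adj

@[simp] lemma joinGraph_adj_inr_inr {a b : V₂} :
    (joinGraph G₁ G₂).Adj (Sum.inr a) (Sum.inr b) ↔ G₂.Adj a b := by
  simpa [joinGraph, G₂.adj_comm b a] using G₂.ne_of_adj

@[simp] lemma joinGraph_adj_inl_inr (a : V₁) (b : V₂) :
    (joinGraph G₁ G₂).Adj (Sum.inl a) (Sum.inr b) := by
  simp [joinGraph]

@[simp] lemma joinGraph_adj_inr_inl (a : V₂) (b : V₁) :
    (joinGraph G₁ G₂).Adj (Sum.inr a) (Sum.inl b) := by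
  simp [joinGraph]

variable [Fintype V₁] [Fintype V₂]

open scoped Classical in
lemma degree_joinGraph_inl (a : V₁) :
    (joinGraph G₁ G₂).degree (Sum.inl a) = G₁.degree a + Fintype.card V₂ := by
  have hnbr : (joinGraph G₁ G₂).neighborFinset (Sum.inl a) =
      (G₁.neighborFinset a).disjSum Finset.univ := by
    ext (x | x) <;> simp
  rw [← card_neighborFinset_eq_degree, hnbr, Finset.card_disjSum, card_neighborFinset_eq_degree,
    Finset.card_univ]

open scoped Classical in
lemma degree_joinGraph_inr (b : V₂) :
    (joinGraph G₁ G₂).degree (Sum.inr b) = Fintype.card V₁ + G₂.degree b := by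
  have hnbr : (joinGraph G₁ G₂).neighborFinset (Sum.inr b) =
      Finset.univ.disjSum (G₂.neighborFinset b) := by
    ext (x | x) <;> simp
  rw [← card_neighborFinset_eq_degree, hnbr, Finset.card_disjSum, card_neighborFinset_eq_degree,
    Finset.card_univ]

variable [DecidableEq V₁] [DecidableEq V₂]

lemma lap_joinGraph :
    lap (joinGraph G₁ G₂) = fromBlocks (lap G₁ + scalar V₁ (Fintype.card V₂ : ℤ))
      (-vecMulVec 1 1) (-vecMulVec 1 1) (lap G₂ + scalar V₂ (Fintype.card V₁ : ℤ)) := by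
  classical
  ext (a | a) (b | b) <;>
    simp [lap, lapMatrix, degMatrix, diagonal_apply, degree_joinGraph_inl, degree_joinGraph_inr,
      Matrix.natCast_apply]
  all_goals split_ifs <;> ring

lemma charmatrix_lap_joinGraph :
    charmatrix (lap (joinGraph G₁ G₂)) =
      fromBlocks (charmatrix (lap G₁ + scalar V₁ (Fintype.card V₂ : ℤ))) (vecMulVec 1 1)
        (vecMulVec 1 1) (charmatrix (lap G₂ + scalar V₂ (Fintype.card V₁ : ℤ))) := by
  rw [lap_joinGraph, charmatrix_fromBlocks]
  congr 1 <;> ext <;> simp [vecMulVec_apply]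

end joinGraph

lemma lap_mulVec_one {V : Type*} [Fintype V] (G : SimpleGraph V) : lap G *ᵥ 1 = 0 := by
  classical
  exact G.lapMatrix_mulVec_const_eq_zero

lemma charmatrix_lap_add_scalar_mulVec_one {V : Type*} [Fintype V] [DecidableEq V]
    (G : SimpleGraph V) (a : ℤ) : charmatrix (lap G + scalar V a) *ᵥ 1 = (X - C a) • 1 :=
  charmatrix_mulVec_one (by rw [add_mulVec, lap_mulVec_one, zero_add, scalar_mulVec])

/-- Kelmans' formula for the Laplacian characteristic polynomial of a join:
`(x-n)(x-m) χ_{G₁*G₂}(x) = x (x-n-m) χ_{G₁}(x-n) χ_{G₂}(x-m)`,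
stated as a polynomial identity after clearing denominators, with `m = |V₁|`, `n = |V₂|`. -/
theorem charpoly_joinGraph {V₁ V₂ : Type*} [Fintype V₁] [Fintype V₂]
    [DecidableEq V₁] [DecidableEq V₂]
    (G₁ : SimpleGraph V₁) (G₂ : SimpleGraph V₂)
    (m n : ℕ) (hm : m = Fintype.card V₁) (hn : n = Fintype.card V₂) :
    (X - C (n : ℤ)) * (X - C (m : ℤ)) * (lap (joinGraph G₁ G₂)).charpoly =
      X * (X - C ((n : ℤ) + m)) * ((lap G₁).charpoly.comp (X - C (n : ℤ))) *
        ((lap G₂).charpoly.comp (X - C (m : ℤ))) := by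
  subst hm hn
  have hdet := det_fromBlocks_vecMulVec_of_mulVec_eq_smul
    (charmatrix_lap_add_scalar_mulVec_one G₁ (Fintype.card V₂))
    (charmatrix_lap_add_scalar_mulVec_one G₂ (Fintype.card V₁))
    (X_sub_C_ne_zero _) (X_sub_C_ne_zero _)
  rw [← charmatrix_lap_joinGraph, one_dotProduct_one, one_dotProduct_one, ← charpoly, ← charpoly,
    ← charpoly, charpoly_add_scalar, charpoly_add_scalar] at hdet
  rw [hdet]
  simp only [map_add, map_natCast]
  ring
end

section
/- Let G be a finite connected graph on n vertices. The Jacobian (critical group) of the cone over G is isomorphic to the cokernel of the ℤ-linear operator Iₙ + L(G) : ℤⁿ → ℤⁿ, where L(G) is the Laplacian of G. -/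
open SimpleGraph

/-- The cone over a graph `G`: the join of `G` with a single new vertex (`none`),
joined by an edge to every vertex of `G`. -/
def cone {V : Type*} (G : SimpleGraph V) : SimpleGraph (Option V) :=
  SimpleGraph.fromRel (fun x y => x = none ∨ ∃ a b, x = some a ∧ y = some b ∧ G.Adj a b)

open scoped Classical in
/-- The cokernel `ℤ^α / im M` of an integer matrix `M`. -/
noncomputable abbrev coker {α : Type*} [Fintype α] (M : Matrix α α ℤ) :=
  (α → ℤ) ⧸ LinearMap.range (Matrix.toLin' M)

open scoped Classical in
/-- The Jacobian (critical group) of a graph: the torsion subgroup of the cokernel of its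
Laplacian acting on `ℤ^V`. -/
noncomputable def jac {V : Type*} [Fintype V] (G : SimpleGraph V) :=
  Submodule.torsion ℤ (coker (lap G))

/-!
Let the apex of the cone be `none`. Deleting the apex row and column of `L(cone G)` leaves
exactly `1 + L(G)`, since every vertex of `G` gains one neighbour. The map `x ↦ (x, -∑ x)`
induces an injection `coker (1 + L(G)) → coker L(cone G)`: a preimage under `L(cone G)` may be
shifted by a constant so that it vanishes at the apex. Its image consists of the classes of
coordinate sum zero. As `1 + L(G)` is positive definite, its cokernel is killed by its determinant,
so the image is torsion; conversely, if `k • x ∈ im L(cone G)` with `k ≠ 0` then `k * ∑ x = 0`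
because the columns of a Laplacian sum to zero, so `x` lies in the image.
-/

open Matrix

section Torsion

variable {n R : Type*} [Fintype n] [DecidableEq n] [CommRing R]

theorem det_smul_mem_range_toLin' (M : Matrix n n R) (x : n → R) :
    M.det • x ∈ LinearMap.range M.toLin' :=
  ⟨cramer M x, mulVec_cramer M x⟩

theorem isTorsionBy_det_coker (M : Matrix n n ℤ) : Module.IsTorsionBy ℤ (coker M) M.det := by
  refine (Module.isTorsionBy_quotient_iff _ _).mpr fun x => ?_
  convert det_smul_mem_range_toLin' M x using 3
  congr!

end Torsion

theorem SimpleGraph.lapMatrix_map_intCast {V R : Type*} [Fintype V] [DecidableEq V] [Ring R]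
    (G : SimpleGraph V) [DecidableRel G.Adj] :
    (G.lapMatrix ℤ).map (Int.cast : ℤ → R) = G.lapMatrix R := by
  ext i j
  simp [lapMatrix, degMatrix, adjMatrix_apply, diagonal_apply, apply_ite (Int.cast : ℤ → R)]

section Laplacian

variable {W : Type*} [Fintype W] (H : SimpleGraph W)

theorem sum_lap_mulVec (y : W → ℤ) : ∑ w, (lap H *ᵥ y) w = 0 := by
  classical
  calc ∑ w, (lap H *ᵥ y) w = (fun _ => 1) ⬝ᵥ (lap H *ᵥ y) := by simp [dotProduct]
    _ = ((lap H)ᵀ *ᵥ fun _ => 1) ⬝ᵥ y := by rw [dotProduct_mulVec, mulVec_transpose]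
    _ = 0 := by
      rw [lap, (H.isSymm_lapMatrix (R := ℤ)).eq, lapMatrix_mulVec_const_eq_zero, zero_dotProduct]

theorem lap_mulVec_const (c : ℤ) : lap H *ᵥ (fun _ => c) = 0 := by
  classical
  have hc : (fun _ : W => c) = c • fun _ => 1 := by simp [Pi.smul_def]
  rw [hc, mulVec_smul, lap, lapMatrix_mulVec_const_eq_zero, smul_zero]

end Laplacian

theorem det_one_add_lap_ne_zero {V : Type*} [Fintype V] [DecidableEq V] (G : SimpleGraph V) :
    (1 + lap G).det ≠ 0 := by
  -- `lap` is built from classical decidability instances; make the given one agree with them.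
  obtain rfl : ‹DecidableEq V› = fun a b => Classical.propDecidable (a = b) := Subsingleton.elim _ _
  classical
  have hpos : ((1 + lap G).map (Int.castRingHom ℝ)).PosDef := by
    rw [Matrix.map_add _ (map_add _), Matrix.map_one _ (map_zero _) (map_one _), lap,
      Int.coe_castRingHom, lapMatrix_map_intCast]
    exact PosDef.one.add_posSemidef (G.posSemidef_lapMatrix ℝ)
  have hunit := (isUnit_iff_isUnit_det _).mp hpos.isUnit
  rw [← RingHom.mapMatrix_apply, ← RingHom.map_det] at hunit
  intro h
  rw [h, map_zero] at hunit
  exact not_isUnit_zero hunit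

@[simp] theorem cone_adj_some_some {V : Type*} (G : SimpleGraph V) (a b : V) :
    (cone G).Adj (some a) (some b) ↔ G.Adj a b := by
  simpa [cone, G.adj_comm b a] using G.ne_of_adj

@[simp] theorem cone_adj_some_none {V : Type*} (G : SimpleGraph V) (v : V) :
    (cone G).Adj (some v) none := by
  simp [cone]

section Reduced

variable {V : Type*} [Fintype V]

def extendNegSum (V : Type*) [Fintype V] : (V → ℤ) →ₗ[ℤ] (Option V → ℤ) where
  toFun x w := w.elim (-∑ v, x v) x
  map_add' x y := by
    funext w
    cases w <;> simp [Finset.sum_add_distrib, add_comm]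
  map_smul' c x := by
    funext w
    cases w <;> simp [Finset.mul_sum]

@[simp] theorem extendNegSum_some (x : V → ℤ) (v : V) : extendNegSum V x (some v) = x v := rfl

@[simp] theorem extendNegSum_none (x : V → ℤ) : extendNegSum V x none = -∑ v, x v := rfl

theorem extendNegSum_injective : Function.Injective (extendNegSum V) :=
  fun _ _ h => funext fun v => congrFun h (some v)

theorem extendNegSum_of_sum_eq_zero {x : Option V → ℤ} (hx : ∑ w, x w = 0) :
    extendNegSum V (fun v => x (some v)) = x := by
  rw [Fintype.sum_option] at hx
  funext w
  cases w with
  | none => simp only [extendNegSum_none]; linarith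
  | some v => rfl

noncomputable def reducedLap (H : SimpleGraph (Option V)) : Matrix V V ℤ :=
  (lap H).submatrix some some

theorem lap_mulVec_eq_extendNegSum (H : SimpleGraph (Option V)) {y : Option V → ℤ}
    (hy : y none = 0) :
    lap H *ᵥ y = extendNegSum V (reducedLap H *ᵥ fun v => y (some v)) := by
  have hsome (v : V) : (lap H *ᵥ y) (some v) = (reducedLap H *ᵥ fun v => y (some v)) v := by
    simp [mulVec, dotProduct, Fintype.sum_option, hy, reducedLap]
  have hnone := sum_lap_mulVec H y
  rw [Fintype.sum_option] at hnone
  funext w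
  cases w with
  | none => simp only [extendNegSum_none, ← hsome]; linarith
  | some v => exact hsome v

end Reduced

theorem reducedLap_cone {V : Type*} [Fintype V] [DecidableEq V] (G : SimpleGraph V) :
    reducedLap (cone G) = 1 + lap G := by
  obtain rfl : ‹DecidableEq V› = fun a b => Classical.propDecidable (a = b) := Subsingleton.elim _ _
  classical
  have hdeg (v : V) : ((cone G).degree (some v) : ℤ) = 1 + G.degree v := by
    simp only [degree_eq_sum_if_adj (R := ℤ), Fintype.sum_option, cone_adj_some_none,
      cone_adj_some_some, if_true]
  ext i j
  simp only [reducedLap, lap, lapMatrix, degMatrix, submatrix_apply, Matrix.sub_apply,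
    diagonal_apply, hdeg, adjMatrix_apply, cone_adj_some_some, Option.some_inj, Matrix.add_apply,
    one_apply]
  split_ifs <;> ring

section ReducedCoker

variable {V : Type*} [Fintype V] (H : SimpleGraph (Option V))

noncomputable def cokerReducedLapToCoker : coker (reducedLap H) →ₗ[ℤ] coker (lap H) :=
  Submodule.mapQ _ _ (extendNegSum V) <| by
    rintro _ ⟨z, rfl⟩
    exact ⟨fun w => w.elim 0 z, lap_mulVec_eq_extendNegSum H rfl⟩

theorem cokerReducedLapToCoker_mk (x : V → ℤ) :
    cokerReducedLapToCoker H (Submodule.Quotient.mk x) =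
      Submodule.Quotient.mk (extendNegSum V x) :=
  rfl

theorem cokerReducedLapToCoker_injective : Function.Injective (cokerReducedLapToCoker H) := by
  classical
  rw [← LinearMap.ker_eq_bot, LinearMap.ker_eq_bot']
  intro c hc
  obtain ⟨x, rfl⟩ := Submodule.Quotient.mk_surjective _ c
  rw [cokerReducedLapToCoker_mk, Submodule.Quotient.mk_eq_zero] at hc
  obtain ⟨y, hy⟩ := hc
  set y₀ : Option V → ℤ := y - fun _ => y none with hy₀
  have hshift : lap H *ᵥ y₀ = lap H *ᵥ y := by rw [hy₀, mulVec_sub, lap_mulVec_const, sub_zero]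
  rw [Submodule.Quotient.mk_eq_zero]
  refine ⟨fun v => y₀ (some v), extendNegSum_injective ?_⟩
  rw [toLin'_apply, ← lap_mulVec_eq_extendNegSum H (by simp [hy₀]), hshift]
  exact hy

theorem range_cokerReducedLapToCoker [DecidableEq V] (hdet : (reducedLap H).det ≠ 0) :
    LinearMap.range (cokerReducedLapToCoker H) = Submodule.torsion ℤ (coker (lap H)) := by
  apply le_antisymm
  · rintro _ ⟨c, rfl⟩
    refine ⟨⟨_, mem_nonZeroDivisors_of_ne_zero hdet⟩, ?_⟩
    rw [Submonoid.mk_smul, ← map_smul, isTorsionBy_det_coker, map_zero]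
  · rintro c ⟨⟨k, hk⟩, hkc⟩
    obtain ⟨x, rfl⟩ := Submodule.Quotient.mk_surjective _ c
    rw [Submonoid.mk_smul, ← Submodule.Quotient.mk_smul, Submodule.Quotient.mk_eq_zero] at hkc
    obtain ⟨y, hy⟩ := hkc
    have hsum : ∑ w, x w = 0 := by
      have h := sum_lap_mulVec H y
      rw [show lap H *ᵥ y = k • x from hy] at h
      simp only [Pi.smul_apply, smul_eq_mul, ← Finset.mul_sum] at h
      exact (mul_eq_zero.mp h).resolve_left (nonZeroDivisors.ne_zero hk)
    exact ⟨Submodule.Quotient.mk fun v => x (some v), by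
      rw [cokerReducedLapToCoker_mk, extendNegSum_of_sum_eq_zero hsum]⟩

end ReducedCoker

theorem jac_cone_iso_coker_one_add_lap_general
    {V : Type*} [Fintype V] [DecidableEq V] (G : SimpleGraph V) :
    Nonempty (jac (cone G) ≃+ coker (1 + lap G)) := by
  have hdet : (reducedLap (cone G)).det ≠ 0 := reducedLap_cone G ▸ det_one_add_lap_ne_zero G
  have e : coker (reducedLap (cone G)) ≃ₗ[ℤ] jac (cone G) :=
    (LinearEquiv.ofInjective _ (cokerReducedLapToCoker_injective _)).trans
      (LinearEquiv.ofEq _ _ (range_cokerReducedLapToCoker _ hdet))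
  rw [reducedLap_cone] at e
  exact ⟨e.symm.toAddEquiv⟩

theorem jac_cone_iso_coker_one_add_lap
    {V : Type*} [Fintype V] [DecidableEq V] (G : SimpleGraph V) (hG : G.Connected) :
    Nonempty (jac (cone G) ≃+ coker (1 + lap G)) :=
  jac_cone_iso_coker_one_add_lap_general G
end
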